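/- For a directed set D of convex Cauchy-closed sets of distributions such that every μ ∈ sup D assigns the same probability p to event A, minProb is continuous: sup_{S∈D} minProb(S, A) = minProb(sup D, A). Equivalently, assuming sup_{S∈D} minProb(S,A) = p − ε with ε > 0 leads to a contradiction via the finite intersection property of the closed sets T_S = {μ ∈ S : μ(A) ≤ p − ε}. -/

import Mathlib

/-!
Every `S ∈ D` is a closed subset of the compact cube `[0,1]^(Option X)`, hence compact. If
`sup_{S ∈ D} minProb S A < c`, each `S ∈ D` contains a distribution with `μ(A) ≤ c`, so the sets
`{μ ∈ S | μ(A) ≤ c}` form a directed family of nonempty compact sets. These are closed because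
`μ(A) ≤ c` says that every finite partial sum of `μ` over `A` is at most `c`. Cantor's
intersection theorem gives a `μ ∈ ⋂₀ D` with `μ(A) ≤ c`, so `p ≤ c`.
-/

/-- A discrete probability distribution on `X ∪ {⊥}` (`⊥` encoded as `none`). -/
def IsDistO {X : Type*} (μ : Option X → ℝ) : Prop :=
  (∀ a, 0 ≤ μ a) ∧ HasSum μ 1

/-- The order on distributions: pointwise `≤` on `X` and reversed on `⊥`. -/
def dLe {X : Type*} (μ ν : Option X → ℝ) : Prop :=
  (∀ x : X, μ (some x) ≤ ν (some x)) ∧ ν none ≤ μ none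

/-- `S` is an element of the convex powerset `C(X)`: a nonempty, up-closed, convex,
Cauchy-closed (topologically closed in the product topology) set of distributions
over `X ∪ {⊥}`. -/
def IsCSet {X : Type*} (S : Set (Option X → ℝ)) : Prop :=
  S.Nonempty ∧ (∀ μ ∈ S, IsDistO μ) ∧
  (∀ μ ∈ S, ∀ ν ∈ S, ∀ p : ℝ, 0 ≤ p → p ≤ 1 →
    (fun a => p * μ a + (1 - p) * ν a) ∈ S) ∧
  (∀ μ ∈ S, ∀ ν, IsDistO ν → dLe μ ν → ν ∈ S) ∧
  IsClosed S

/-- The probability a distribution assigns to an event `A ⊆ X`. -/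
noncomputable def probOf {X : Type*} (μ : Option X → ℝ) (A : Set X) : ℝ :=
  ∑' x : A, μ (some ↑x)

/-- The minimum probability of the event `A` over the set of distributions `S`. -/
noncomputable def minProb {X : Type*} (S : Set (Option X → ℝ)) (A : Set X) : ℝ :=
  sInf ((fun μ => probOf μ A) '' S)

/-- Kleisli extension of `f` for the convex powerset monad: mix, for each state in
the support of some `μ ∈ S`, a continuation distribution drawn from `f`; at `⊥`
the continuation may be any distribution (the bottom element `⊥_C`). -/
def kleisli {X : Type*} (f : X → Set (Option X → ℝ)) (S : Set (Option X → ℝ)) :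
    Set (Option X → ℝ) :=
  {g | ∃ μ ∈ S, ∃ ν : Option X → (Option X → ℝ),
        (∀ a, IsDistO (ν a)) ∧
        (∀ x : X, μ (some x) ≠ 0 → ν (some x) ∈ f x) ∧
        g = fun b => ∑' a : Option X, μ a * ν a b}

/-- Binary convex (nondeterministic) union `S ⋓ T`. -/
def cUnion2 {X : Type*} (S T : Set (Option X → ℝ)) : Set (Option X → ℝ) :=
  {g | ∃ μ ∈ S, ∃ ν ∈ T, ∃ p : ℝ, 0 ≤ p ∧ p ≤ 1 ∧
        g = fun a => p * μ a + (1 - p) * ν a}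

/-- Finite convex (nondeterministic) union `⋓_{i∈s} S_i`: all convex combinations
of choices from the `S_i`. -/
def cUnionF {I X : Type*} (s : Finset I) (S : I → Set (Option X → ℝ)) :
    Set (Option X → ℝ) :=
  {g | ∃ w : I → ℝ, (∀ i, 0 ≤ w i) ∧ (∑ i ∈ s, w i) = 1 ∧
        ∃ μ : I → (Option X → ℝ), (∀ i ∈ s, μ i ∈ S i) ∧
          g = fun a => ∑ i ∈ s, w i * μ i a}

open Set

section

variable {X : Type*}

theorem IsDistO.mem_Icc {μ : Option X → ℝ} (hμ : IsDistO μ) (a : Option X) : μ a ∈ Icc 0 1 :=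
  ⟨hμ.1 a, le_hasSum hμ.2 a fun b _ => hμ.1 b⟩

theorem IsCSet.isCompact {S : Set (Option X → ℝ)} (hS : IsCSet S) : IsCompact S :=
  (isCompact_univ_pi fun _ => isCompact_Icc).of_isClosed_subset hS.2.2.2.2
    fun μ hμ a _ => (hS.2.1 μ hμ).mem_Icc a

theorem IsDistO.summable_restrict {μ : Option X → ℝ} (hμ : IsDistO μ) (A : Set X) :
    Summable fun x : A => μ (some ↑x) :=
  hμ.2.summable.comp_injective fun _ _ h => Subtype.ext (Option.some_injective X h)

theorem IsDistO.probOf_nonneg {μ : Option X → ℝ} (hμ : IsDistO μ) (A : Set X) :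
    0 ≤ probOf μ A :=
  tsum_nonneg fun _ => hμ.1 _

theorem IsDistO.probOf_le_iff {μ : Option X → ℝ} (hμ : IsDistO μ) (A : Set X) (c : ℝ) :
    probOf μ A ≤ c ↔ ∀ F : Finset A, ∑ x ∈ F, μ (some ↑x) ≤ c :=
  ⟨fun h F => ((hμ.summable_restrict A).sum_le_tsum F fun _ _ => hμ.1 _).trans h,
    (hμ.summable_restrict A).tsum_le_of_sum_le⟩

theorem isClosed_sep_probOf_le {S : Set (Option X → ℝ)} (hS : IsClosed S)
    (hdist : ∀ μ ∈ S, IsDistO μ) (A : Set X) (c : ℝ) :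
    IsClosed {μ ∈ S | probOf μ A ≤ c} := by
  have hsep : {μ ∈ S | probOf μ A ≤ c} =
      S ∩ ⋂ F : Finset A, {μ | ∑ x ∈ F, μ (some ↑x) ≤ c} := by
    ext μ
    simp only [mem_inter_iff, mem_iInter, mem_ofPred_eq]
    exact and_congr_right fun hμ => (hdist μ hμ).probOf_le_iff A c
  rw [hsep]
  exact hS.inter <| isClosed_iInter fun F =>
    isClosed_le (continuous_finsetSum F fun x _ => continuous_apply (some (x : X)))
      continuous_const

theorem minProb_le_probOf {S : Set (Option X → ℝ)} (hdist : ∀ μ ∈ S, IsDistO μ) (A : Set X)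
    {μ : Option X → ℝ} (hμ : μ ∈ S) : minProb S A ≤ probOf μ A :=
  csInf_le ⟨0, forall_mem_image.2 fun ν hν => (hdist ν hν).probOf_nonneg A⟩ (mem_image_of_mem _ hμ)

theorem minProb_eq_of_forall_probOf_eq {S : Set (Option X → ℝ)} (hS : S.Nonempty) {A : Set X}
    {p : ℝ} (hp : ∀ μ ∈ S, probOf μ A = p) : minProb S A = p := by
  have himage : (fun μ => probOf μ A) '' S = {p} :=
    eq_singleton_iff_nonempty_unique_mem.2 ⟨hS.image _, forall_mem_image.2 hp⟩
  rw [minProb, himage, csInf_singleton]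

section Directed

variable {D : Set (Set (Option X → ℝ))} (hne : D.Nonempty) (hC : ∀ S ∈ D, IsCSet S)
  (hdir : DirectedOn (· ⊇ ·) D)
include hne hC hdir

theorem IsCSet.sInter_nonempty : (⋂₀ D).Nonempty :=
  have : Nonempty D := hne.to_subtype
  IsCompact.nonempty_sInter_of_directed_nonempty_isCompact_isClosed hdir
    (fun S hS => (hC S hS).1) (fun S hS => (hC S hS).isCompact) fun S hS => (hC S hS).2.2.2.2

theorem IsCSet.exists_mem_sInter_probOf_le (A : Set X) {c : ℝ}
    (hc : ∀ S ∈ D, ∃ μ ∈ S, probOf μ A ≤ c) : ∃ μ ∈ ⋂₀ D, probOf μ A ≤ c := by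
  set T : Set (Option X → ℝ) → Set (Option X → ℝ) := fun S => {μ ∈ S | probOf μ A ≤ c}
  have hT : ∀ S ∈ D, IsCompact (T S) ∧ IsClosed (T S) := fun S hS =>
    have hclosed := isClosed_sep_probOf_le (hC S hS).2.2.2.2 (hC S hS).2.1 A c
    ⟨(hC S hS).isCompact.of_isClosed_subset hclosed (sep_subset _ _), hclosed⟩
  obtain ⟨μ, hμ⟩ : (⋂₀ (T '' D)).Nonempty :=
    have : Nonempty (T '' D) := (hne.image T).to_subtype
    IsCompact.nonempty_sInter_of_directed_nonempty_isCompact_isClosed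
      (hdir.mono_comp fun _ _ h _ hμ => ⟨h hμ.1, hμ.2⟩)
      (forall_mem_image.2 hc) (forall_mem_image.2 fun S hS => (hT S hS).1)
      (forall_mem_image.2 fun S hS => (hT S hS).2)
  rw [sInter_image, mem_iInter₂] at hμ
  obtain ⟨S₀, hS₀⟩ := hne
  exact ⟨μ, fun S hS => (hμ S hS).1, (hμ S₀ hS₀).2⟩

end Directed

end

theorem stmt_15_general {X : Type*} (D : Set (Set (Option X → ℝ)))
    (hne : D.Nonempty) (hC : ∀ S ∈ D, IsCSet S)
    (hdir : ∀ S ∈ D, ∀ T ∈ D, ∃ U ∈ D, U ⊆ S ∧ U ⊆ T)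
    (A : Set X) (p : ℝ) (hp : ∀ μ ∈ ⋂₀ D, probOf μ A = p) :
    sSup ((fun S => minProb S A) '' D) = minProb (⋂₀ D) A := by
  obtain ⟨μ₀, hμ₀⟩ := IsCSet.sInter_nonempty hne hC hdir
  rw [minProb_eq_of_forall_probOf_eq ⟨μ₀, hμ₀⟩ hp]
  have hle : ∀ S ∈ D, minProb S A ≤ p := fun S hS =>
    hp μ₀ hμ₀ ▸ minProb_le_probOf (hC S hS).2.1 A (hμ₀ S hS)
  refine le_antisymm (csSup_le (hne.image _) (forall_mem_image.2 hle))
    (le_of_forall_gt_imp_ge_of_dense fun c hc => ?_)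
  obtain ⟨μ, hμ, hμc⟩ := IsCSet.exists_mem_sInter_probOf_le hne hC hdir A fun S hS => by
    have hlt : minProb S A < c :=
      (le_csSup ⟨p, forall_mem_image.2 hle⟩ (mem_image_of_mem _ hS)).trans_lt hc
    obtain ⟨_, ⟨μ, hμ, rfl⟩, hμc⟩ := exists_lt_of_csInf_lt ((hC S hS).1.image _) hlt
    exact ⟨μ, hμ, hμc.le⟩
  exact hp μ hμ ▸ hμc

/-- Scott continuity of `minProb`: for a directed set `D` of convex
powerset elements (Smyth order, suprema given by intersections) such that every
distribution in `sup D = ⋂₀ D` assigns the same probability `p` to the event `A`,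
`sup_{S∈D} minProb S A = minProb (sup D) A`. -/
theorem stmt_15 {X : Type*} [Countable X] (D : Set (Set (Option X → ℝ)))
    (hne : D.Nonempty) (hC : ∀ S ∈ D, IsCSet S)
    (hdir : ∀ S ∈ D, ∀ T ∈ D, ∃ U ∈ D, U ⊆ S ∧ U ⊆ T)
    (A : Set X) (p : ℝ) (hp : ∀ μ ∈ ⋂₀ D, probOf μ A = p) :
    sSup ((fun S => minProb S A) '' D) = minProb (⋂₀ D) A :=
  stmt_15_general D hne hC hdir A p hp
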